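/- Let H be a Hilbert space and A, Λ bounded linear maps with AΛ = Id − K where K is compact and ‖Kf‖ < ‖f‖ for all f ≠ 0. Then Λ has a bounded left inverse given by B = (∑_{m=0}^∞ K^m) ∘ A, i.e., BΛ = Id. -/

import Mathlib

/-!
Compactness upgrades the pointwise strict contraction `‖K f‖ < ‖f‖` to `‖K²‖ < 1`
(`‖K‖` itself may equal `1`): on the compact
closure of the image of the unit ball under `K`, which lies in the unit ball, `‖K ·‖` attains its
maximum, and that maximum is `< 1`. So the Neumann series `∑ Kᵐ` converges, its sum inverts
`Id - K = AΛ` from the left, and composing with `A` gives the left inverse of `Λ`.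
-/

open Metric

namespace ContinuousLinearMap

variable {𝕜 E F G : Type*} [RCLike 𝕜]
  [NormedAddCommGroup E] [NormedSpace 𝕜 E] [NormedAddCommGroup F] [NormedSpace 𝕜 F]
  [NormedAddCommGroup G] [NormedSpace 𝕜 G]

theorem norm_le_one_of_norm_apply_lt {T : E →L[𝕜] F} (hT : ∀ x, x ≠ 0 → ‖T x‖ < ‖x‖) :
    ‖T‖ ≤ 1 :=
  T.opNorm_le_bound zero_le_one fun x => by
    rcases eq_or_ne x 0 with rfl | hx
    · simp
    · simpa using (hT x hx).le

theorem norm_comp_lt_one_of_isCompactOperator {K : E →L[𝕜] F} {T : F →L[𝕜] G}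
    (hK : IsCompactOperator K) (hK1 : ‖K‖ ≤ 1) (hT : ∀ y, y ≠ 0 → ‖T y‖ < ‖y‖) :
    ‖T.comp K‖ < 1 := by
  set C := closure (K '' closedBall 0 1)
  have hC : IsCompact C := hK.isCompact_closure_image_closedBall 1
  have hC_ball : C ⊆ closedBall 0 1 := by
    refine closure_minimal (Set.image_subset_iff.2 fun x hx => ?_) isClosed_closedBall
    rw [Set.mem_preimage, mem_closedBall_zero_iff]
    exact K.le_of_opNorm_le hK1 x |>.trans (by simpa using hx)
  have hT_lt : ∀ y ∈ C, ‖T y‖ < 1 := by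
    intro y hy
    rcases eq_or_ne y 0 with rfl | hy0
    · simp
    · exact (hT y hy0).trans_le (mem_closedBall_zero_iff.1 (hC_ball hy))
  obtain ⟨y₀, hy₀, hmax⟩ := hC.exists_isMaxOn ⟨0, subset_closure ⟨0, by simp, map_zero K⟩⟩
    T.continuous.norm.continuousOn
  refine (opNorm_le_of_unit_norm (norm_nonneg _) fun x hx => ?_).trans_lt (hT_lt y₀ hy₀)
  exact hmax (subset_closure ⟨x, by simp [hx], rfl⟩)

end ContinuousLinearMap

theorem summable_pow_of_norm_sq_lt_one {R : Type*} [NormedRing R] [CompleteSpace R] {x : R}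
    (h : ‖x ^ 2‖ < 1) : Summable (x ^ ·) := by
  have h_even := summable_geometric_of_norm_lt_one h
  refine Summable.even_add_odd (by simpa [pow_mul] using h_even) ?_
  simpa [pow_succ, pow_mul] using h_even.mul_right x

theorem stmt2_general {H H' : Type*} [NormedAddCommGroup H] [InnerProductSpace ℝ H] [CompleteSpace H]
    [NormedAddCommGroup H'] [InnerProductSpace ℝ H']
    (Λ : H →L[ℝ] H') (A : H' →L[ℝ] H) (K : H →L[ℝ] H)
    (hK : IsCompactOperator K) (hstrict : ∀ f : H, f ≠ 0 → ‖K f‖ < ‖f‖)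
    (hAΛ : A.comp Λ = 1 - K) :
    ∃ S : H →L[ℝ] H, HasSum (fun m : ℕ => K ^ m) S ∧ (S.comp A).comp Λ = 1 := by
  have hK_sq : ‖K ^ 2‖ < 1 := by
    simpa [sq, ContinuousLinearMap.mul_def] using
      K.norm_comp_lt_one_of_isCompactOperator hK
        (ContinuousLinearMap.norm_le_one_of_norm_apply_lt hstrict) hstrict
  have hsum : Summable (K ^ ·) := summable_pow_of_norm_sq_lt_one hK_sq
  refine ⟨∑' m, K ^ m, hsum.hasSum, ?_⟩
  rw [ContinuousLinearMap.comp_assoc, hAΛ]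
  exact hsum.tsum_pow_mul_one_sub

/-- If `AΛ = Id - K` with `K` compact and `‖Kf‖ < ‖f‖` for `f ≠ 0`, then
`B = (∑ K^m) ∘ A` is a bounded left inverse of `Λ`. -/
theorem stmt2 {H H' : Type*} [NormedAddCommGroup H] [InnerProductSpace ℝ H] [CompleteSpace H]
    [NormedAddCommGroup H'] [InnerProductSpace ℝ H'] [CompleteSpace H']
    (Λ : H →L[ℝ] H') (A : H' →L[ℝ] H) (K : H →L[ℝ] H)
    (hK : IsCompactOperator K) (hstrict : ∀ f : H, f ≠ 0 → ‖K f‖ < ‖f‖)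
    (hAΛ : A.comp Λ = 1 - K) :
    ∃ S : H →L[ℝ] H, HasSum (fun m : ℕ => K ^ m) S ∧ (S.comp A).comp Λ = 1 :=
  stmt2_general Λ A K hK hstrict hAΛ
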